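/- In the hyperballean F_ω^♭, for every finite subset H ⊆ ℕ and every nonempty finite subset F ⊆ ℕ such that every element of F is greater than every element of H (in particular max H < min F when H is nonempty), the ball B^♭(F,H) equals the singleton {F}. Consequently, for every finite H ⊆ ℕ there exist infinitely many points F of F_ω^♭ with B^♭(F,H) = {F}. -/
import Mathlib


/-- The ball `B_F(H,F)` of the ballean `F_ω` around a set `H`:
`B_F(H,F) = H ∪ F` if `H ∩ F ≠ ∅` and `B_F(H,F) = H` otherwise. -/
def BFset (H F : Finset ℕ) : Finset ℕ :=
  if (H ∩ F).Nonempty then H ∪ F else H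

/-- The ball `B^♭(H,F)` of the hyperballean `F_ω^♭`:
all nonempty finite `Z` with `Z ⊆ B_F(H,F)` and `H ⊆ B_F(Z,F)`. -/
def hyperballF (H F : Finset ℕ) : Set (Finset ℕ) :=
  {Z | Z.Nonempty ∧ Z ⊆ BFset H F ∧ H ⊆ BFset Z F}

lemma BFset_disj {H F : Finset ℕ} (h : H ∩ F = ∅) : BFset H F = H := by
  simp [BFset, h]

lemma isolated_main (H F : Finset ℕ) (hF : F.Nonempty)
    (hlt : ∀ a ∈ H, ∀ b ∈ F, a < b) : hyperballF F H = {F} := by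
  have hFH : F ∩ H = ∅ := by
    apply Finset.eq_empty_of_forall_notMem
    intro x hx
    simp only [Finset.mem_inter] at hx
    exact lt_irrefl x (hlt x hx.2 x hx.1)
  have hB : BFset F H = F := BFset_disj hFH
  ext Z
  simp only [hyperballF, Set.mem_setOf_eq, Set.mem_singleton_iff, hB]
  constructor
  · rintro ⟨hZne, hZF, hFZ⟩
    have hZH : Z ∩ H = ∅ := by
      apply Finset.eq_empty_of_forall_notMem
      intro x hx
      simp only [Finset.mem_inter] at hx
      exact lt_irrefl x (hlt x hx.2 x (hZF hx.1))
    rw [BFset_disj hZH] at hFZ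
    exact Finset.Subset.antisymm hZF hFZ
  · rintro rfl
    exact ⟨hF, Finset.Subset.refl _, by rw [hB]⟩

/-- In `F_ω^♭`, if every element of a nonempty finite `F ⊆ ℕ` is greater than
every element of the finite radius `H ⊆ ℕ`, then `B^♭(F,H) = {F}`.
Consequently, for every finite `H` there are infinitely many points `F` of
`F_ω^♭` with `B^♭(F,H) = {F}` (asymptotically isolated balls). -/
theorem hyperballean_isolated_balls :
    (∀ H F : Finset ℕ, F.Nonempty → (∀ a ∈ H, ∀ b ∈ F, a < b) →
      hyperballF F H = {F}) ∧
    (∀ H : Finset ℕ,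
      {F : Finset ℕ | F.Nonempty ∧ hyperballF F H = {F}}.Infinite) := by
  refine ⟨isolated_main, fun H => ?_⟩
  apply Set.infinite_of_injective_forall_mem
    (f := fun n : ℕ => ({n + H.sup id + 1} : Finset ℕ))
  · intro a b hab
    simpa using hab
  · intro n
    refine ⟨Finset.singleton_nonempty _, isolated_main H _ (Finset.singleton_nonempty _) ?_⟩
    intro a ha b hb
    simp only [Finset.mem_singleton] at hb
    subst hb
    have := Finset.le_sup (f := id) ha
    simp only [id_eq] at this
    omega
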